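/- Let X be a point of Aff(c), let y be an integer with 2 ≤ y and either 2y ≤ n+1 or (2y = n+2 and y ∈ U), and let z be any integer. Then ∑_j ∑_{i=n+2−y}^{n+1} X(i,j) = 1, where the outer sum ranges over all j ∈ {1,...,n+1} with ν_{c^{-1}}(j) ≡ z (mod y). -/
import Mathlib


/-- `w` is a c-singleton with respect to the lower-barred set `D` and upper-barred set `U`. -/
def IsCSingleton (n : ℕ) (D U : Finset ℕ) (w : ℕ → ℕ) : Prop :=
  ∀ i j k : ℕ, 1 ≤ i → i < j → j < k → k ≤ n + 1 →
    ¬(w j < w k ∧ w k < w i ∧ w k ∈ D) ∧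
    ¬(w k < w i ∧ w i < w j ∧ w i ∈ U) ∧
    ¬(w i < w k ∧ w k < w j ∧ w k ∈ D) ∧
    ¬(w j < w i ∧ w i < w k ∧ w i ∈ U)

/-- The permutation matrix of `w` (extended by the identity pattern outside `{1,…,n+1}`). -/
def permMatrix (w : ℕ → ℕ) : ℕ → ℕ → ℝ := fun i j => if w i = j then 1 else 0

/-- The set of permutation matrices of the c-singletons; its affine span is `Aff(c)`. -/
def cSingletonMatrices (n : ℕ) (D U : Finset ℕ) : Set (ℕ → ℕ → ℝ) :=
  {X | ∃ w : Equiv.Perm ℕ, (∀ x ∉ Finset.Icc 1 (n + 1), w x = x) ∧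
        IsCSingleton n D U ⇑w ∧ X = permMatrix ⇑w}

/-- The function ν_c determined by the lower-barred set `D` and the upper-barred set `U`;
`ν_{c⁻¹}` is `nu n U D` (roles of `D` and `U` interchanged). -/
def nu (n : ℕ) (D U : Finset ℕ) (i : ℕ) : ℤ :=
  if i = 1 then 0
  else if i = n + 1 then (D.card : ℤ) + 1
  else if i ∈ D then ((D.filter (fun d => d ≤ i)).card : ℤ)
  else if 2 * i ≤ n + 1 then -(((U.filter (fun u => u ≤ i)).card : ℤ))
  else (n : ℤ) + 1 - ((U.filter (fun u => u ≤ i)).card : ℤ)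

namespace St8

lemma rank_mono {A : Finset ℕ} {a b : ℕ} (h : a ≤ b) :
    (A.filter (fun x => x ≤ a)).card ≤ (A.filter (fun x => x ≤ b)).card := by
  apply Finset.card_le_card
  intro x hx
  simp only [Finset.mem_filter] at hx ⊢
  exact ⟨hx.1, hx.2.trans h⟩

lemma rank_strict {A : Finset ℕ} {a b : ℕ} (ha : a ∈ A) (hab : b < a) :
    (A.filter (fun x => x ≤ b)).card < (A.filter (fun x => x ≤ a)).card := by
  apply Finset.card_lt_card
  refine ⟨?_, fun hsub => ?_⟩
  · intro x hx
    simp only [Finset.mem_filter] at hx ⊢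
    exact ⟨hx.1, hx.2.trans hab.le⟩
  · have h1 : a ∈ A.filter (fun x => x ≤ a) := by
      simp only [Finset.mem_filter]; exact ⟨ha, le_refl a⟩
    have := hsub h1
    simp only [Finset.mem_filter] at this
    omega

lemma cardUD {n : ℕ} {D U : Finset ℕ} (hD : D ⊆ Finset.Icc 2 n)
    (hU : U = Finset.Icc 2 n \ D) : D.card + U.card = n - 1 ∧ D.card ≤ n - 1 := by
  have h1 : (Finset.Icc 2 n).card = n - 1 := by rw [Nat.card_Icc]; omega
  have h2 : U.card = (n - 1) - D.card := by
    rw [hU, Finset.card_sdiff_of_subset hD, h1]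
  have h3 : D.card ≤ n - 1 := h1 ▸ Finset.card_le_card hD
  omega

/-- Classification of the values of `ν = nu n U D` (roles: `U` gets positive ranks). -/
lemma class_of_nu {n : ℕ} {D U : Finset ℕ} (hn : 1 ≤ n) (hD : D ⊆ Finset.Icc 2 n)
    (hU : U = Finset.Icc 2 n \ D) {x : ℕ} (hx : x ∈ Finset.Icc 1 (n + 1)) :
    (nu n U D x < 0 ∧ x ∈ D ∧ 2 * x ≤ n + 1 ∧ 2 ≤ x ∧ x ≤ n ∧
      nu n U D x = -((D.filter (fun t => t ≤ x)).card : ℤ) ∧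
      1 ≤ ((D.filter (fun t => t ≤ x)).card : ℤ) ∧
      ((D.filter (fun t => t ≤ x)).card : ℤ) ≤ ((D.filter (fun t => 2 * t ≤ n + 1)).card : ℤ)) ∨
    (nu n U D x = 0 ∧ x = 1) ∨
    (0 < nu n U D x ∧ nu n U D x ≤ (U.card : ℤ) ∧ x ∈ U ∧ 2 ≤ x ∧ x ≤ n ∧
      nu n U D x = ((U.filter (fun t => t ≤ x)).card : ℤ)) ∨
    (nu n U D x = (U.card : ℤ) + 1 ∧ x = n + 1) ∨
    ((U.card : ℤ) + 1 < nu n U D x ∧ x ∈ D ∧ n + 1 < 2 * x ∧ 2 ≤ x ∧ x ≤ n ∧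
      nu n U D x = (n : ℤ) + 1 - ((D.filter (fun t => t ≤ x)).card : ℤ) ∧
      ((D.filter (fun t => 2 * t ≤ n + 1)).card : ℤ) + 1 ≤ ((D.filter (fun t => t ≤ x)).card : ℤ) ∧
      ((D.filter (fun t => t ≤ x)).card : ℤ) ≤ (D.card : ℤ)) := by
  obtain ⟨hcard, hDle⟩ := cardUD hD hU
  simp only [Finset.mem_Icc] at hx
  by_cases h1 : x = 1
  · right; left; constructor
    · simp [nu, h1]
    · exact h1
  by_cases h2 : x = n + 1
  · right; right; right; left
    constructor
    · simp only [nu, if_neg (by omega : ¬ (x = 1)), if_pos h2]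
    · exact h2
  have hx2 : 2 ≤ x ∧ x ≤ n := by omega
  have hmem : x ∈ D ∨ x ∈ U := by
    by_cases hxD : x ∈ D
    · exact Or.inl hxD
    · right; rw [hU, Finset.mem_sdiff, Finset.mem_Icc]; exact ⟨⟨hx2.1, hx2.2⟩, hxD⟩
  rcases hmem with hxD | hxU
  · -- x ∈ D
    have hxnU : x ∉ U := by rw [hU, Finset.mem_sdiff]; tauto
    have hrk1 : 1 ≤ (D.filter (fun t => t ≤ x)).card := by
      have : x ∈ D.filter (fun t => t ≤ x) := by
        simp only [Finset.mem_filter]; exact ⟨hxD, le_refl x⟩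
      exact Finset.card_pos.mpr ⟨x, this⟩
    by_cases hsm : 2 * x ≤ n + 1
    · left
      have hsub : D.filter (fun t => t ≤ x) ⊆ D.filter (fun t => 2 * t ≤ n + 1) := by
        intro t ht; simp only [Finset.mem_filter] at ht ⊢; exact ⟨ht.1, by omega⟩
      have hle := Finset.card_le_card hsub
      have hval : nu n U D x = -((D.filter (fun t => t ≤ x)).card : ℤ) := by
        simp only [nu, if_neg h1, if_neg h2, if_neg hxnU, if_pos hsm]
      refine ⟨by omega, hxD, hsm, hx2.1, hx2.2, hval, by exact_mod_cast hrk1, by exact_mod_cast hle⟩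
    · right; right; right; right
      have hval : nu n U D x = (n : ℤ) + 1 - ((D.filter (fun t => t ≤ x)).card : ℤ) := by
        simp only [nu, if_neg h1, if_neg h2, if_neg hxnU, if_neg hsm]
      have hnm : x ∉ D.filter (fun t => 2 * t ≤ n + 1) := by
        simp only [Finset.mem_filter]; omega
      have hsub : insert x (D.filter (fun t => 2 * t ≤ n + 1)) ⊆ D.filter (fun t => t ≤ x) := by
        intro t ht
        rcases Finset.mem_insert.mp ht with rfl | ht'
        · simp only [Finset.mem_filter]; exact ⟨hxD, le_refl t⟩
        · simp only [Finset.mem_filter] at ht' ⊢; exact ⟨ht'.1, by omega⟩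
      have hle := Finset.card_le_card hsub
      rw [Finset.card_insert_of_notMem hnm] at hle
      have hle2 : (D.filter (fun t => t ≤ x)).card ≤ D.card := Finset.card_filter_le _ _
      refine ⟨by omega, hxD, by omega, hx2.1, hx2.2, hval,
        by exact_mod_cast hle, by exact_mod_cast hle2⟩
  · -- x ∈ U
    right; right; left
    have hval : nu n U D x = ((U.filter (fun t => t ≤ x)).card : ℤ) := by
      simp only [nu, if_neg h1, if_neg h2, if_pos hxU]
    have hrk1 : 1 ≤ (U.filter (fun t => t ≤ x)).card := by
      have : x ∈ U.filter (fun t => t ≤ x) := by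
        simp only [Finset.mem_filter]; exact ⟨hxU, le_refl x⟩
      exact Finset.card_pos.mpr ⟨x, this⟩
    have hle : (U.filter (fun t => t ≤ x)).card ≤ U.card := Finset.card_filter_le _ _
    refine ⟨?_, ?_, hxU, hx2.1, hx2.2, hval⟩ <;> rw [hval]
    · exact_mod_cast hrk1
    · exact_mod_cast hle


lemma nu_injOn {n : ℕ} {D U : Finset ℕ} (hn : 1 ≤ n) (hD : D ⊆ Finset.Icc 2 n)
    (hU : U = Finset.Icc 2 n \ D) :
    Set.InjOn (nu n U D) (Finset.Icc 1 (n + 1)) := by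
  intro a ha b hb hab
  have ha' := class_of_nu hn hD hU (Finset.mem_coe.mp ha)
  have hb' := class_of_nu hn hD hU (Finset.mem_coe.mp hb)
  have key : ∀ (A : Finset ℕ), a ∈ A → b ∈ A →
      ((A.filter (fun t => t ≤ a)).card : ℤ) = ((A.filter (fun t => t ≤ b)).card : ℤ) → a = b := by
    intro A haA hbA h
    rcases lt_trichotomy a b with h' | h' | h'
    · have := rank_strict hbA h'
      exfalso; omega
    · exact h'
    · have := rank_strict haA h'
      exfalso; omega
  rcases ha' with ⟨hv, haD, _, _, _, he, _, _⟩ | ⟨hv, rfl⟩ | ⟨hv, hv2, haU, _, _, he⟩ |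
      ⟨hv, rfl⟩ | ⟨hv, haD, _, _, _, he, _, _⟩ <;>
    rcases hb' with ⟨hw, hbD, _, _, _, hf, _, _⟩ | ⟨hw, rfl⟩ | ⟨hw, hw2, hbU, _, _, hf⟩ |
      ⟨hw, rfl⟩ | ⟨hw, hbD, _, _, _, hf, _, _⟩ <;>
    try omega
  · exact key D haD hbD (by omega)
  · exact key U haU hbU (by omega)
  · exact key D haD hbD (by omega)

lemma nu_image {n : ℕ} {D U : Finset ℕ} (hn : 1 ≤ n) (hD : D ⊆ Finset.Icc 2 n)
    (hU : U = Finset.Icc 2 n \ D) :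
    (Finset.Icc 1 (n + 1)).image (nu n U D) =
      Finset.Icc (-((D.filter (fun t => 2 * t ≤ n + 1)).card : ℤ))
        ((n : ℤ) - ((D.filter (fun t => 2 * t ≤ n + 1)).card : ℤ)) := by
  obtain ⟨hcard, hDle⟩ := cardUD hD hU
  have hk1 : (D.filter (fun t => 2 * t ≤ n + 1)).card ≤ D.card := Finset.card_filter_le _ _

  apply Finset.eq_of_subset_of_card_le
  · -- image ⊆ Icc
    intro v hv
    rw [Finset.mem_image] at hv
    obtain ⟨x, hx, rfl⟩ := hv
    rw [Finset.mem_Icc]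
    rcases class_of_nu hn hD hU hx with ⟨hv, _, _, _, _, he, h1, h2⟩ | ⟨hv, _⟩ |
        ⟨hv, hv2, _, _, _, _⟩ | ⟨hv, _⟩ | ⟨hv, _, _, _, _, he, h1, h2⟩ <;>
      constructor <;> omega
  · -- card Icc ≤ card image
    rw [Finset.card_image_of_injOn (nu_injOn hn hD hU), Nat.card_Icc, Int.card_Icc]
    omega

end St8

namespace St8b
open St8

lemma gen {n : ℕ} (hn : 1 ≤ n) {D U : Finset ℕ} (hD : D ⊆ Finset.Icc 2 n)
    (hU : U = Finset.Icc 2 n \ D) {y : ℕ} (hy : 2 ≤ y)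
    (hy' : 2 * y ≤ n + 1 ∨ (2 * y = n + 2 ∧ y ∈ U)) (z : ℤ)
    (w : Equiv.Perm ℕ) (hfix : ∀ x ∉ Finset.Icc 1 (n + 1), w x = x)
    (hw : IsCSingleton n D U ⇑w) :
    ((Finset.Icc (n + 2 - y) (n + 1)).filter
      (fun k => nu n U D (w k) ≡ z [ZMOD (y : ℤ)])).card = 1 := by
  have hyU2 : 2 * y = n + 2 → (2 ≤ y ∧ y ≤ n ∧ y ∉ D) := by
    rintro h
    rcases hy' with h' | ⟨h', hyU⟩
    · omega
    · rw [hU, Finset.mem_sdiff, Finset.mem_Icc] at hyU; exact ⟨hyU.1.1, hyU.1.2, hyU.2⟩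
  have hyn : y ≤ n := by
    rcases hy' with h | ⟨h, _⟩
    · omega
    · exact (hyU2 h).2.1
  set preF := Finset.Icc 1 (n + 1 - y) with hpreF
  set tailF := Finset.Icc (n + 2 - y) (n + 1) with htailF
  have hmaps : ∀ x ∈ Finset.Icc 1 (n + 1), w x ∈ Finset.Icc 1 (n + 1) := by
    intro x hx
    by_contra hc
    have h1 := hfix _ hc
    have h2 : w x = x := w.injective h1
    rw [h2] at hc; exact hc hx
  have hpre_mem : ∀ i ∈ preF, 1 ≤ i ∧ i ≤ n + 1 - y := by
    intro i hi; rw [hpreF, Finset.mem_Icc] at hi; exact hi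
  have htail_mem : ∀ k ∈ tailF, n + 2 - y ≤ k ∧ k ≤ n + 1 := by
    intro k hk; rw [htailF, Finset.mem_Icc] at hk; exact hk
  have hpre_sub : ∀ i ∈ preF, i ∈ Finset.Icc 1 (n + 1) := by
    intro i hi; have := hpre_mem i hi; rw [Finset.mem_Icc]; omega
  have htail_sub : ∀ k ∈ tailF, k ∈ Finset.Icc 1 (n + 1) := by
    intro k hk; have := htail_mem k hk; rw [Finset.mem_Icc]; omega
  have hwpre : ∀ i ∈ preF, 1 ≤ w i ∧ w i ≤ n + 1 := by
    intro i hi; have := hmaps i (hpre_sub i hi); rw [Finset.mem_Icc] at this; exact this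
  have hwtail : ∀ k ∈ tailF, 1 ≤ w k ∧ w k ≤ n + 1 := by
    intro k hk; have := hmaps k (htail_sub k hk); rw [Finset.mem_Icc] at this; exact this
  have hprecard : preF.card = n + 1 - y := by rw [hpreF, Nat.card_Icc]; omega
  have htailcard : tailF.card = y := by rw [htailF, Nat.card_Icc]; omega
  -- counting lemmas
  have hcount_lt : ∀ k ∈ tailF, (∀ i ∈ preF, w i < w k) → n + 2 - y ≤ w k := by
    intro k hk hall
    have hsub : preF.image w ⊆ Finset.Icc 1 (w k - 1) := by
      intro j hj
      obtain ⟨i, hi, rfl⟩ := Finset.mem_image.mp hj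
      have h1 := hwpre i hi
      have h2 := hall i hi
      rw [Finset.mem_Icc]; omega
    have := Finset.card_le_card hsub
    rw [Finset.card_image_of_injOn (w.injective.injOn), hprecard, Nat.card_Icc] at this
    omega
  have hcount_gt : ∀ k ∈ tailF, (∀ i ∈ preF, w k < w i) → w k ≤ y := by
    intro k hk hall
    have hsub : preF.image w ⊆ Finset.Icc (w k + 1) (n + 1) := by
      intro j hj
      obtain ⟨i, hi, rfl⟩ := Finset.mem_image.mp hj
      have h1 := hwpre i hi
      have h2 := hall i hi
      rw [Finset.mem_Icc]; omega
    have := Finset.card_le_card hsub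
    have h3 := hwtail k hk
    rw [Finset.card_image_of_injOn (w.injective.injOn), hprecard, Nat.card_Icc] at this
    omega
  -- (A)
  have hA : ∀ k ∈ tailF, w k ∈ D →
      (2 * w k ≤ n + 1 ∧ ∀ i ∈ preF, w k < w i) ∨
      (n + 1 < 2 * w k ∧ ∀ i ∈ preF, w i < w k) := by
    intro k hk hkD
    have hkb := htail_mem k hk
    by_cases hlt : ∀ i ∈ preF, w i < w k
    · right
      refine ⟨?_, hlt⟩
      have h1 := hcount_lt k hk hlt
      rcases hy' with h | ⟨h, _⟩ <;> omega
    · by_cases hgt : ∀ i ∈ preF, w k < w i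
      · left
        refine ⟨?_, hgt⟩
        have h1 := hcount_gt k hk hgt
        rcases hy' with h | ⟨h, _⟩
        · omega
        · have h2 := hyU2 h
          have : w k ≠ y := fun hh => h2.2.2 (hh ▸ hkD)
          omega
      · exfalso
        push_neg at hlt hgt
        obtain ⟨i1, hi1, hi1'⟩ := hlt
        obtain ⟨i0, hi0, hi0'⟩ := hgt
        have hb1 := hpre_mem i1 hi1
        have hb0 := hpre_mem i0 hi0
        have hne1 : w i1 ≠ w k := fun hh => by have := w.injective hh; omega
        have hne0 : w i0 ≠ w k := fun hh => by have := w.injective hh; omega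
        have hlt0 : w i0 < w k := by omega
        have hlt1 : w k < w i1 := by omega
        rcases lt_trichotomy i0 i1 with h | h | h
        · exact (hw i0 i1 k (by omega) h (by omega) (by omega)).2.2.1 ⟨hlt0, hlt1, hkD⟩
        · subst h; omega
        · exact (hw i1 i0 k (by omega) h (by omega) (by omega)).1 ⟨hlt0, hlt1, hkD⟩
  -- (B)
  have hB : ∀ i ∈ preF, w i ∈ U →
      (∀ k ∈ tailF, w k < w i) ∨ (∀ k ∈ tailF, w i < w k) := by
    intro i hi hiU
    have hbi := hpre_mem i hi
    by_cases hlt : ∀ k ∈ tailF, w k < w i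
    · exact Or.inl hlt
    · by_cases hgt : ∀ k ∈ tailF, w i < w k
      · exact Or.inr hgt
      · exfalso
        push_neg at hlt hgt
        obtain ⟨k1, hk1, hk1'⟩ := hlt
        obtain ⟨k0, hk0, hk0'⟩ := hgt
        have hb1 := htail_mem k1 hk1
        have hb0 := htail_mem k0 hk0
        have hne1 : w k1 ≠ w i := fun hh => by have := w.injective hh; omega
        have hne0 : w k0 ≠ w i := fun hh => by have := w.injective hh; omega
        have hlt1 : w i < w k1 := by omega
        have hlt0 : w k0 < w i := by omega
        rcases lt_trichotomy k0 k1 with h | h | h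
        · exact (hw i k0 k1 (by omega) (by omega) h (by omega)).2.2.2 ⟨hlt0, hlt1, hiU⟩
        · subst h; omega
        · exact (hw i k1 k0 (by omega) (by omega) h (by omega)).2.1 ⟨hlt0, hlt1, hiU⟩
  -- no prefix ν-value strictly between two tail ν-values
  have hNB : ∀ i ∈ preF, ∀ k ∈ tailF, ∀ k' ∈ tailF,
      ¬(nu n U D (w k) < nu n U D (w i) ∧ nu n U D (w i) < nu n U D (w k')) := by
    intro i hi k hk k' hk' ⟨hlt1, hlt2⟩
    obtain ⟨hcard, hDle⟩ := cardUD hD hU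
    have hwi := hmaps i (hpre_sub i hi)
    have hwk := hmaps k (htail_sub k hk)
    have hwk' := hmaps k' (htail_sub k' hk')
    rcases class_of_nu hn hD hU hwi with
        ⟨hv, hiD, hism, hi2, hin, hie, hir1, hir2⟩ | ⟨hv, hione⟩ |
        ⟨hv, hv2, hiU, hi2, hin, hie⟩ | ⟨hv, hitop⟩ |
        ⟨hv, hiD, hila, hi2, hin, hie, hir1, hir2⟩
    · -- w i ∈ D, small
      rcases class_of_nu hn hD hU hwk with
          ⟨kv, hkD, hksm, _, _, hke, _, _⟩ | ⟨kv, _⟩ | ⟨kv, _, _, _, _, _⟩ | ⟨kv, _⟩ |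
          ⟨kv, _, _, _, _, _, _, _⟩ <;> try omega
      have hsmall : ∀ i' ∈ preF, w k < w i' := by
        rcases hA k hk hkD with ⟨_, h⟩ | ⟨h, _⟩
        · exact h
        · omega
      have h1 : w k < w i := hsmall i hi
      have h2 := rank_mono (A := D) (le_of_lt h1)
      omega
    · -- w i = 1
      rcases class_of_nu hn hD hU hwk with
          ⟨kv, hkD, hksm, _, _, hke, _, _⟩ | ⟨kv, _⟩ | ⟨kv, _, _, _, _, _⟩ | ⟨kv, _⟩ |
          ⟨kv, _, _, _, _, _, _, _⟩ <;> try omega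
      have hsmall : ∀ i' ∈ preF, w k < w i' := by
        rcases hA k hk hkD with ⟨_, h⟩ | ⟨h, _⟩
        · exact h
        · omega
      have h1 : w k < w i := hsmall i hi
      have h2 := (hwtail k hk).1
      omega
    · -- w i ∈ U
      have hklt : w k < w i := by
        rcases class_of_nu hn hD hU hwk with
            ⟨kv, hkD, hksm, _, _, hke, _, _⟩ | ⟨kv, hkone⟩ |
            ⟨kv, kv2, hkU, _, _, hke⟩ | ⟨kv, hktop⟩ | ⟨kv, _, _, _, _, _, _, _⟩
        · rcases hA k hk hkD with ⟨_, h⟩ | ⟨h, _⟩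
          · exact h i hi
          · omega
        · omega
        · by_contra hcon
          have := rank_mono (A := U) (le_of_not_gt hcon)
          omega
        · omega
        · omega
      have hk'gt : w i < w k' := by
        rcases class_of_nu hn hD hU hwk' with
            ⟨kv, hkD, hksm, _, _, hke, _, _⟩ | ⟨kv, hkone⟩ |
            ⟨kv, kv2, hkU, _, _, hke⟩ | ⟨kv, hktop⟩ |
            ⟨kv, hkD, hkla, _, _, hke, _, _⟩
        · omega
        · omega
        · by_contra hcon
          have := rank_mono (A := U) (le_of_not_gt hcon)
          omega
        · omega
        · rcases hA k' hk' hkD with ⟨h, _⟩ | ⟨_, h⟩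
          · omega
          · exact h i hi
      rcases hB i hi hiU with h | h
      · exact absurd (h k' hk') (by omega)
      · exact absurd (h k hk) (by omega)
    · -- w i = n + 1
      rcases class_of_nu hn hD hU hwk' with
          ⟨kv, _, _, _, _, _, _, _⟩ | ⟨kv, _⟩ | ⟨kv, kv2, _, _, _, _⟩ | ⟨kv, _⟩ |
          ⟨kv, hkD, hkla, _, _, hke, _, _⟩ <;> try omega
      have hlarge : ∀ i' ∈ preF, w i' < w k' := by
        rcases hA k' hk' hkD with ⟨h, _⟩ | ⟨_, h⟩
        · omega
        · exact h
      have h1 : w i < w k' := hlarge i hi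
      have h2 := (hwtail k' hk').2
      omega
    · -- w i ∈ D, large
      rcases class_of_nu hn hD hU hwk' with
          ⟨kv, _, _, _, _, _, _, _⟩ | ⟨kv, _⟩ | ⟨kv, kv2, _, _, _, _⟩ | ⟨kv, _⟩ |
          ⟨kv, hkD, hkla, _, _, hke, _, _⟩ <;> try omega
      have hlarge : ∀ i' ∈ preF, w i' < w k' := by
        rcases hA k' hk' hkD with ⟨h, _⟩ | ⟨_, h⟩
        · omega
        · exact h
      have h1 : w i < w k' := hlarge i hi
      have h2 := rank_mono (A := D) (le_of_lt h1)
      omega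
  -- the tail ν-values form an interval
  have hinjT : ∀ k ∈ tailF, ∀ k' ∈ tailF, nu n U D (w k) = nu n U D (w k') → k = k' := by
    intro k hk k' hk' h
    exact w.injective (nu_injOn hn hD hU (hmaps k (htail_sub k hk)) (hmaps k' (htail_sub k' hk')) h)
  set Tf := tailF.image (fun k => nu n U D (w k)) with hTf
  have hTcard : Tf.card = y := by
    rw [hTf, Finset.card_image_of_injOn, htailcard]
    intro k hk k' hk' h
    exact hinjT k (Finset.mem_coe.mp hk) k' (Finset.mem_coe.mp hk') h
  have hTne : Tf.Nonempty := Finset.card_pos.mp (by omega)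
  obtain ⟨ka, hka, hkaeq⟩ := Finset.mem_image.mp (Tf.min'_mem hTne)
  obtain ⟨kb, hkb, hkbeq⟩ := Finset.mem_image.mp (Tf.max'_mem hTne)
  have hbig : ∀ k ∈ tailF, nu n U D (w k) ∈
      Finset.Icc (-((D.filter (fun t => 2 * t ≤ n + 1)).card : ℤ))
        ((n : ℤ) - ((D.filter (fun t => 2 * t ≤ n + 1)).card : ℤ)) := by
    intro k hk
    rw [← nu_image hn hD hU]
    exact Finset.mem_image_of_mem _ (hmaps k (htail_sub k hk))
  have hsub2 : Finset.Icc (Tf.min' hTne) (Tf.max' hTne) ⊆ Tf := by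
    intro v hv
    rw [Finset.mem_Icc] at hv
    rcases eq_or_lt_of_le hv.1 with heq | hlt1
    · rw [← heq]; exact Tf.min'_mem hTne
    rcases eq_or_lt_of_le hv.2 with heq | hlt2
    · rw [heq]; exact Tf.max'_mem hTne
    have hvV : v ∈ (Finset.Icc 1 (n + 1)).image (nu n U D) := by
      rw [nu_image hn hD hU, Finset.mem_Icc]
      have h1 := hbig ka hka
      have h2 := hbig kb hkb
      rw [Finset.mem_Icc] at h1 h2
      rw [hkaeq] at h1
      rw [hkbeq] at h2
      omega
    obtain ⟨x, hx, hxv⟩ := Finset.mem_image.mp hvV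
    have hm : w.symm x ∈ Finset.Icc 1 (n + 1) := by
      by_contra hc
      have h1 := hfix _ hc
      have h2 : w.symm x = x := h1.symm.trans (w.apply_symm_apply x)
      exact hc (by rw [h2]; exact hx)
    have hwm : w (w.symm x) = x := w.apply_symm_apply x
    rw [Finset.mem_Icc] at hm
    by_cases hcase : w.symm x ≤ n + 1 - y
    · exfalso
      have hmem : w.symm x ∈ preF := by rw [hpreF, Finset.mem_Icc]; omega
      exact hNB _ hmem ka hka kb hkb ⟨by rw [hwm, hxv, hkaeq]; exact hlt1,
        by rw [hwm, hxv, hkbeq]; exact hlt2⟩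
    · have hmem : w.symm x ∈ tailF := by rw [htailF, Finset.mem_Icc]; omega
      exact Finset.mem_image.mpr ⟨_, hmem, by rw [hwm, hxv]⟩
  have hdiff : ∀ k ∈ tailF, ∀ k' ∈ tailF,
      nu n U D (w k') - nu n U D (w k) ≤ (y : ℤ) - 1 := by
    intro k hk k' hk'
    have h1 : Tf.min' hTne ≤ nu n U D (w k) :=
      Tf.min'_le _ (Finset.mem_image_of_mem (fun k => nu n U D (w k)) hk)
    have h2 : nu n U D (w k') ≤ Tf.max' hTne :=
      Tf.le_max' _ (Finset.mem_image_of_mem (fun k => nu n U D (w k)) hk')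
    have h3 := Finset.card_le_card hsub2
    have h4 : Tf.min' hTne ≤ Tf.max' hTne := Tf.min'_le _ (Tf.max'_mem hTne)
    rw [hTcard, Int.card_Icc] at h3
    omega
  -- residues mod y are pairwise distinct on the tail
  haveI : NeZero y := ⟨by omega⟩
  have hinjZ : ∀ k ∈ tailF, ∀ k' ∈ tailF,
      ((nu n U D (w k) : ZMod y)) = ((nu n U D (w k') : ZMod y)) → k = k' := by
    intro k hk k' hk' h
    by_contra hne
    have hne2 : nu n U D (w k) ≠ nu n U D (w k') := fun hh => hne (hinjT k hk k' hk' hh)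
    have hmod : nu n U D (w k) ≡ nu n U D (w k') [ZMOD (y : ℤ)] :=
      (ZMod.intCast_eq_intCast_iff _ _ _).mp h
    rcases lt_trichotomy (nu n U D (w k)) (nu n U D (w k')) with h' | h' | h'
    · have := Int.le_of_dvd (by omega) hmod.dvd
      have := hdiff k hk k' hk'
      omega
    · exact hne2 h'
    · have := Int.le_of_dvd (by omega) hmod.symm.dvd
      have := hdiff k' hk' k hk
      omega
  have himg : tailF.image (fun k => ((nu n U D (w k) : ZMod y))) = Finset.univ := by
    apply Finset.eq_univ_of_card
    rw [Finset.card_image_of_injOn, htailcard, ZMod.card]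
    intro k hk k' hk' h
    exact hinjZ k (Finset.mem_coe.mp hk) k' (Finset.mem_coe.mp hk') h
  have hzmem : ((z : ZMod y)) ∈ tailF.image (fun k => ((nu n U D (w k) : ZMod y))) := by
    rw [himg]; exact Finset.mem_univ _
  obtain ⟨k0, hk0, hk0e⟩ := Finset.mem_image.mp hzmem
  rw [Finset.card_eq_one]
  refine ⟨k0, ?_⟩
  ext k
  simp only [Finset.mem_filter, Finset.mem_singleton]
  constructor
  · rintro ⟨hk, hmod⟩
    apply hinjZ k hk k0 hk0
    rw [hk0e, ZMod.intCast_eq_intCast_iff]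
    exact hmod
  · rintro rfl
    exact ⟨hk0, (ZMod.intCast_eq_intCast_iff _ _ _).mp hk0e⟩

end St8b

namespace St8b

lemma gen_sum {n : ℕ} (hn : 1 ≤ n) {D U : Finset ℕ} (hD : D ⊆ Finset.Icc 2 n)
    (hU : U = Finset.Icc 2 n \ D) {y : ℕ} (hy : 2 ≤ y)
    (hy' : 2 * y ≤ n + 1 ∨ (2 * y = n + 2 ∧ y ∈ U)) (z : ℤ)
    (w : Equiv.Perm ℕ) (hfix : ∀ x ∉ Finset.Icc 1 (n + 1), w x = x)
    (hw : IsCSingleton n D U ⇑w) :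
    ∑ j ∈ (Finset.Icc 1 (n + 1)).filter (fun j => nu n U D j ≡ z [ZMOD (y : ℤ)]),
      ∑ i ∈ Finset.Icc (n + 2 - y) (n + 1), permMatrix (⇑w) i j = 1 := by
  have hmaps : ∀ x ∈ Finset.Icc 1 (n + 1), w x ∈ Finset.Icc 1 (n + 1) := by
    intro x hx
    by_contra hc
    have h1 := hfix _ hc
    have h2 : w x = x := w.injective h1
    rw [h2] at hc; exact hc hx
  rw [Finset.sum_comm]
  have hstep : ∀ i ∈ Finset.Icc (n + 2 - y) (n + 1),
      (∑ j ∈ (Finset.Icc 1 (n + 1)).filter (fun j => nu n U D j ≡ z [ZMOD (y : ℤ)]),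
        permMatrix (⇑w) i j) =
      (if nu n U D (w i) ≡ z [ZMOD (y : ℤ)] then (1 : ℝ) else 0) := by
    intro i hi
    have h1 : (∑ j ∈ (Finset.Icc 1 (n + 1)).filter (fun j => nu n U D j ≡ z [ZMOD (y : ℤ)]),
        permMatrix (⇑w) i j) =
        (if w i ∈ (Finset.Icc 1 (n + 1)).filter (fun j => nu n U D j ≡ z [ZMOD (y : ℤ)])
          then (1 : ℝ) else 0) := by
      unfold permMatrix
      exact Finset.sum_ite_eq _ (w i) (fun _ => (1 : ℝ))
    rw [h1]
    congr 1
    simp only [Finset.mem_filter, eq_iff_iff]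
    have hwi : w i ∈ Finset.Icc 1 (n + 1) := by
      apply hmaps
      rw [Finset.mem_Icc] at hi ⊢
      omega
    tauto
  rw [Finset.sum_congr rfl hstep, Finset.sum_boole,
    St8b.gen hn hD hU hy hy' z w hfix hw, Nat.cast_one]

end St8b


/-- Bottom sum relations: for `X ∈ Aff(c)`, `2 ≤ y` with `2y ≤ n+1` (or `2y = n+2`, `y ∈ U`),
and any integer `z`, the sum of the entries `X(i,j)` with `n+2-y ≤ i ≤ n+1` over all columns
`j` with `ν_{c⁻¹}(j) ≡ z (mod y)` equals `1`. -/
theorem statement8 (n : ℕ) (hn : 1 ≤ n) (D U : Finset ℕ)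
    (hD : D ⊆ Finset.Icc 2 n) (hU : U = Finset.Icc 2 n \ D)
    (X : ℕ → ℕ → ℝ) (hX : X ∈ affineSpan ℝ (cSingletonMatrices n D U))
    (y : ℕ) (hy : 2 ≤ y) (hy' : 2 * y ≤ n + 1 ∨ (2 * y = n + 2 ∧ y ∈ U)) (z : ℤ) :
    ∑ j ∈ (Finset.Icc 1 (n + 1)).filter (fun j => nu n U D j ≡ z [ZMOD (y : ℤ)]),
      ∑ i ∈ Finset.Icc (n + 2 - y) (n + 1), X i j = 1 := by
  refine affineSpan_induction (p := fun X =>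
    ∑ j ∈ (Finset.Icc 1 (n + 1)).filter (fun j => nu n U D j ≡ z [ZMOD (y : ℤ)]),
      ∑ i ∈ Finset.Icc (n + 2 - y) (n + 1), X i j = 1) hX ?_ ?_
  · rintro Y ⟨w, hfix, hw, rfl⟩
    exact St8b.gen_sum hn hD hU hy hy' z w hfix hw
  · intro c u v w' hu hv hw'
    have expand : ∀ i j : ℕ, (c • (u -ᵥ v) +ᵥ w') i j = c * u i j - c * v i j + w' i j := by
      intro i j
      simp [mul_sub]
    simp only [expand, Finset.sum_add_distrib, Finset.sum_sub_distrib, ← Finset.mul_sum,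
      hu, hv, hw']
    ring
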